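/- Let $M$ be a positive integer and define $R:\mathbb{R}^M \to \mathbb{R}$ by $R(\upsilon) = \sum_{m=1}^M \frac{\exp(\upsilon_m)}{1 + \sum_{l=1}^M \exp(\upsilon_l)}$, and let $p_m(\upsilon) = \frac{\exp(\upsilon_m)}{1 + \sum_{l=1}^M \exp(\upsilon_l)}$. Then for all $m, n \in [M]$, the second partial derivatives satisfy $\left|\frac{\partial^2 R}{\partial \upsilon_m \partial \upsilon_n}\right| \le 3 p_m(\upsilon)$ if $m = n$, and $\left|\frac{\partial^2 R}{\partial \upsilon_m \partial \upsilon_n}\right| \le 2 p_m(\upsilon) p_n(\upsilon)$ if $m \ne n$. -/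

import Mathlib

/-!
With `S = 1 + ∑ exp υ_l`, the choice probabilities sum to `R = 1 - S⁻¹`, so `∂_n R = e^{υ_n} / S²`
and `∂_m ∂_n R = p_n S⁻¹ (δ_{mn} - 2 p_m)`. Since `0 ≤ S⁻¹ ≤ 1` and `0 ≤ p_m ≤ 1`, this is at most
`p_m` in absolute value on the diagonal and at most `2 p_m p_n` off it.
-/

open Real ContinuousLinearMap

section MNL

variable {ι : Type*} [Fintype ι]

/-- The MNL normaliser; the `1` is the outside option of utility `0`. -/
noncomputable def mnlDenom (υ : ι → ℝ) : ℝ := 1 + ∑ l, exp (υ l)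

noncomputable def mnlProb (υ : ι → ℝ) (m : ι) : ℝ := exp (υ m) / mnlDenom υ

lemma one_le_mnlDenom (υ : ι → ℝ) : 1 ≤ mnlDenom υ :=
  le_add_of_nonneg_right (Finset.sum_nonneg fun l _ => (exp_pos (υ l)).le)

lemma mnlDenom_pos (υ : ι → ℝ) : 0 < mnlDenom υ :=
  zero_lt_one.trans_le (one_le_mnlDenom υ)

lemma exp_le_mnlDenom (υ : ι → ℝ) (k : ι) : exp (υ k) ≤ mnlDenom υ :=
  (Finset.single_le_sum (fun l _ => (exp_pos (υ l)).le) (Finset.mem_univ k)).trans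
    (le_add_of_nonneg_left zero_le_one)

lemma mnlProb_nonneg (υ : ι → ℝ) (m : ι) : 0 ≤ mnlProb υ m :=
  div_nonneg (exp_pos _).le (mnlDenom_pos υ).le

lemma mnlProb_le_one (υ : ι → ℝ) (m : ι) : mnlProb υ m ≤ 1 :=
  div_le_one_of_le₀ (exp_le_mnlDenom υ m) (mnlDenom_pos υ).le

lemma sum_mnlProb (υ : ι → ℝ) : ∑ m, mnlProb υ m = 1 - (mnlDenom υ)⁻¹ := by
  have hS := (mnlDenom_pos υ).ne'
  simp only [mnlProb, ← Finset.sum_div]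
  field_simp
  simp only [mnlDenom]
  ring

lemma hasFDerivAt_exp_apply (υ : ι → ℝ) (k : ι) :
    HasFDerivAt (fun v : ι → ℝ => exp (v k)) (exp (υ k) • (proj k : (ι → ℝ) →L[ℝ] ℝ)) υ :=
  (hasFDerivAt_apply k υ).exp

lemma hasFDerivAt_mnlDenom (υ : ι → ℝ) :
    HasFDerivAt mnlDenom (∑ l, exp (υ l) • (proj l : (ι → ℝ) →L[ℝ] ℝ)) υ :=
  (HasFDerivAt.fun_sum fun l _ => hasFDerivAt_exp_apply υ l).const_add 1

variable [DecidableEq ι]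

lemma sum_exp_smul_proj_single (υ : ι → ℝ) (k : ι) :
    (∑ l, exp (υ l) • (proj l : (ι → ℝ) →L[ℝ] ℝ)) (Pi.single k 1) = exp (υ k) := by
  simp [sum_apply, Pi.single_apply]

lemma fderiv_sum_mnlProb_single (υ : ι → ℝ) (n : ι) :
    fderiv ℝ (fun v => ∑ m, mnlProb v m) υ (Pi.single n 1) = exp (υ n) * (mnlDenom υ ^ 2)⁻¹ := by
  have hR : HasFDerivAt (fun v => ∑ m, mnlProb v m)
      (-(-(mnlDenom υ ^ 2)⁻¹ • ∑ l, exp (υ l) • (proj l : (ι → ℝ) →L[ℝ] ℝ))) υ := by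
    simp_rw [sum_mnlProb]
    exact ((hasDerivAt_inv (mnlDenom_pos υ).ne').comp_hasFDerivAt υ
      (hasFDerivAt_mnlDenom υ)).const_sub 1
  rw [hR.fderiv, neg_apply, smul_apply, sum_exp_smul_proj_single, smul_eq_mul]
  ring

lemma fderiv_fderiv_sum_mnlProb_single (υ : ι → ℝ) (m n : ι) :
    fderiv ℝ (fun v => fderiv ℝ (fun v => ∑ k, mnlProb v k) v (Pi.single n 1)) υ
        (Pi.single m 1) =
      mnlProb υ n * (mnlDenom υ)⁻¹ * ((if m = n then 1 else 0) - 2 * mnlProb υ m) := by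
  have hS := (mnlDenom_pos υ).ne'
  have hinv : HasFDerivAt (fun v => (mnlDenom v ^ 2)⁻¹) _ υ :=
    ((hasDerivAt_pow 2 (mnlDenom υ)).inv (pow_ne_zero 2 hS)).comp_hasFDerivAt υ
      (hasFDerivAt_mnlDenom υ)
  simp_rw [fderiv_sum_mnlProb_single]
  rw [((hasFDerivAt_exp_apply υ n).fun_mul hinv).fderiv]
  simp only [add_apply, smul_apply, sum_exp_smul_proj_single, proj_apply, smul_eq_mul, mnlProb]
  by_cases hmn : m = n
  · subst hmn
    simp only [Pi.single_eq_same, if_true]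
    field_simp
    ring
  · simp only [Pi.single_eq_of_ne' hmn, if_neg hmn]
    field_simp
    ring

lemma abs_fderiv_fderiv_sum_mnlProb_single_le (υ : ι → ℝ) (m n : ι) :
    |fderiv ℝ (fun v => fderiv ℝ (fun v => ∑ k, mnlProb v k) v (Pi.single n 1)) υ
        (Pi.single m 1)| ≤
      if m = n then 3 * mnlProb υ m else 2 * mnlProb υ m * mnlProb υ n := by
  rw [fderiv_fderiv_sum_mnlProb_single]
  have hm := mnlProb_nonneg υ m
  have hn := mnlProb_nonneg υ n
  have hq₀ : 0 ≤ (mnlDenom υ)⁻¹ := inv_nonneg.2 (mnlDenom_pos υ).le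
  have hq₁ : (mnlDenom υ)⁻¹ ≤ 1 := inv_le_one_of_one_le₀ (one_le_mnlDenom υ)
  rw [abs_mul, abs_of_nonneg (mul_nonneg hn hq₀)]
  split_ifs with hmn
  · subst hmn
    have hm₁ := mnlProb_le_one υ m
    calc mnlProb υ m * (mnlDenom υ)⁻¹ * |1 - 2 * mnlProb υ m|
        ≤ mnlProb υ m * 1 * 3 := by
          gcongr
          exact abs_le.2 ⟨by linarith, by linarith⟩
      _ = 3 * mnlProb υ m := by ring
  · rw [zero_sub, abs_neg, abs_of_nonneg (mul_nonneg zero_le_two hm)]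
    nlinarith [mul_le_mul_of_nonneg_left hq₁ (mul_nonneg hm hn)]

end MNL

theorem mnl_second_partial_deriv_bound_general (M : ℕ)
    (R : (Fin M → ℝ) → ℝ)
    (hR : R = fun υ => ∑ m, Real.exp (υ m) / (1 + ∑ l, Real.exp (υ l)))
    (p : Fin M → (Fin M → ℝ) → ℝ)
    (hp : p = fun m υ => Real.exp (υ m) / (1 + ∑ l, Real.exp (υ l)))
    (υ : Fin M → ℝ) (m n : Fin M) :
    |fderiv ℝ (fun v => fderiv ℝ R v (Pi.single n 1)) υ (Pi.single m 1)|
      ≤ if m = n then 3 * p m υ else 2 * p m υ * p n υ := by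
  obtain rfl : R = fun υ => ∑ k, mnlProb υ k := hR
  obtain rfl : p = fun m υ => mnlProb υ m := hp
  exact abs_fderiv_fderiv_sum_mnlProb_single_le υ m n

/-- Lemma (second partial derivatives of the MNL expected value):
For `R υ = ∑ m, exp(υ m) / (1 + ∑ l, exp(υ l))` and
`p m υ = exp(υ m) / (1 + ∑ l, exp(υ l))`, the second partial derivatives satisfy
`|∂²R/∂υ_m∂υ_n| ≤ 3 p_m(υ)` if `m = n` and `≤ 2 p_m(υ) p_n(υ)` otherwise. -/
theorem mnl_second_partial_deriv_bound (M : ℕ) (hM : 0 < M)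
    (R : (Fin M → ℝ) → ℝ)
    (hR : R = fun υ => ∑ m, Real.exp (υ m) / (1 + ∑ l, Real.exp (υ l)))
    (p : Fin M → (Fin M → ℝ) → ℝ)
    (hp : p = fun m υ => Real.exp (υ m) / (1 + ∑ l, Real.exp (υ l)))
    (υ : Fin M → ℝ) (m n : Fin M) :
    |fderiv ℝ (fun v => fderiv ℝ R v (Pi.single n 1)) υ (Pi.single m 1)|
      ≤ if m = n then 3 * p m υ else 2 * p m υ * p n υ :=
  mnl_second_partial_deriv_bound_general M R hR p hp υ m n
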